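/- arXiv:1612.05939 — 6 statements merged into one kernel-verified Lean document; each statement's English description precedes it below -/
import Mathlib

section
/- Let X, Y, Z be measurable spaces and let f : X × Y → Z be a function. Then f is measurable with respect to Σ_{X⊗Y} (and the σ-algebra of Z) if and only if both: (i) for every x ∈ X the function y ↦ f(x,y) is measurable from Y to Z, and (ii) the curried map x ↦ (y ↦ f(x,y)), regarded as a map from X to Hom(Y,Z), is measurable with respect to Σ_{Y⊸Z}. (This gives the currying bijection Meas(X⊗Y, Z) ≅ Meas(X, Y⊸Z).) -/
open MeasureTheory

/-- The canonical tensor σ-algebra `Σ_{X⊗Y}`: a set is measurable iff all of its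
vertical and horizontal sections are measurable. -/
def tensorSigma (X Y : Type*) [MeasurableSpace X] [MeasurableSpace Y] :
    MeasurableSpace (X × Y) where
  MeasurableSet' A :=
    (∀ x : X, MeasurableSet {y : Y | (x, y) ∈ A}) ∧
    (∀ y : Y, MeasurableSet {x : X | (x, y) ∈ A})
  measurableSet_empty := ⟨fun _ => by simp, fun _ => by simp⟩
  measurableSet_compl := fun A hA =>
    ⟨fun x => (hA.1 x).compl, fun y => (hA.2 y).compl⟩
  measurableSet_iUnion := fun A hA =>
    ⟨fun x => by
        have : {y : Y | (x, y) ∈ ⋃ n, A n} = ⋃ n, {y | (x, y) ∈ A n} := by ext; simp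
        rw [this]; exact MeasurableSet.iUnion fun n => (hA n).1 x,
     fun y => by
        have : {x : X | (x, y) ∈ ⋃ n, A n} = ⋃ n, {x | (x, y) ∈ A n} := by ext; simp
        rw [this]; exact MeasurableSet.iUnion fun n => (hA n).2 y⟩

/-- The internal-hom σ-algebra `Σ_{X⊸Y}` on the set of measurable functions,
generated by the sets `⟨x,U⟩ = {f | f x ∈ U}`. -/
def homSigma (X Y : Type*) [MeasurableSpace X] [MeasurableSpace Y] :
    MeasurableSpace {f : X → Y // Measurable f} :=
  MeasurableSpace.generateFrom
    {S | ∃ (x : X) (U : Set Y), MeasurableSet U ∧ S = {f | f.1 x ∈ U}}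

/-- The family `Ω_{X,Y}` of sets of the form `⟨h,V⟩` for `h : ℕ → X` injective
and `V ⊆ Y^ℕ`. -/
def Omega (X Y : Type*) [MeasurableSpace X] [MeasurableSpace Y] :
    Set (Set {f : X → Y // Measurable f}) :=
  {S | ∃ h : ℕ → X, Function.Injective h ∧
        ∃ V : Set (ℕ → Y), S = {f | (fun n => f.1 (h n)) ∈ V}}

theorem measurable_tensorSigma_iff {X Y Z : Type*} [MeasurableSpace X] [MeasurableSpace Y]
    [MeasurableSpace Z] (f : X × Y → Z) :
    @Measurable _ _ (tensorSigma X Y) _ f ↔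
      (∀ x, Measurable fun y => f (x, y)) ∧ ∀ y, Measurable fun x => f (x, y) :=
  ⟨fun hf => ⟨fun x _ hU => (hf hU).1 x, fun y _ hU => (hf hU).2 y⟩,
    fun ⟨hX, hY⟩ _ hU => ⟨fun x => hX x hU, fun y => hY y hU⟩⟩

theorem measurable_homSigma_eval {Y Z : Type*} [MeasurableSpace Y] [MeasurableSpace Z] (y : Y) :
    @Measurable _ _ (homSigma Y Z) _ fun g : {g : Y → Z // Measurable g} => g.1 y :=
  fun _ hU => MeasurableSpace.measurableSet_generateFrom ⟨y, _, hU, rfl⟩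

theorem measurable_homSigma_iff {X Y Z : Type*} [MeasurableSpace X] [MeasurableSpace Y]
    [MeasurableSpace Z] (g : X → {g : Y → Z // Measurable g}) :
    @Measurable _ _ _ (homSigma Y Z) g ↔ ∀ y, Measurable fun x => (g x).1 y := by
  refine ⟨fun hg y => (measurable_homSigma_eval y).comp hg, fun h => ?_⟩
  refine measurable_generateFrom ?_
  rintro _ ⟨y, U, hU, rfl⟩
  exact h y hU

/-- Currying: a function `f : X × Y → Z` is measurable for `Σ_{X⊗Y}` iff every
section `y ↦ f (x, y)` is measurable and the curried map
`x ↦ (y ↦ f (x, y))` is measurable into `(Hom(Y,Z), Σ_{Y⊸Z})`. -/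
theorem giry_currying {X Y Z : Type*} [MeasurableSpace X] [MeasurableSpace Y]
    [MeasurableSpace Z] (f : X × Y → Z) :
    @Measurable _ _ (tensorSigma X Y) _ f ↔
      ∃ h : ∀ x : X, Measurable fun y => f (x, y),
        @Measurable _ _ _ (homSigma Y Z)
          (fun x => (⟨fun y => f (x, y), h x⟩ : {g : Y → Z // Measurable g})) := by
  simp only [measurable_tensorSigma_iff, measurable_homSigma_iff, exists_prop]
end

section
/- Let (C, ⊗, I) be a monoidal category such that the unit I is a separator (i.e., for all parallel morphisms u, v : X → Y, if e ≫ u = e ≫ v for every e : I → X then u = v) and such that every morphism z : I → X ⊗ Y can be written as z = (λ_I)⁻¹ ≫ (x ⊗ y) for some x : I → X and y : I → Y. Let T be a monad on C, and let σ and τ be two families of morphisms σ_{X,Y}, τ_{X,Y} : X ⊗ T Y → T(X ⊗ Y), each natural in the first variable X (with respect to the functors (−) ⊗ T Y and T((−) ⊗ Y)), natural in the second variable Y, and each satisfying the left unit axiom σ_{I,Y} ≫ T(λ_Y) = λ_{T Y} (and likewise for τ). Then σ_{X,Y} = τ_{X,Y} for all objects X and Y; moreover each is determined by the formula σ_{X,Y}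 ∘ (x ⊗ ξ) ∘ (λ_I)⁻¹ = T((x ⊗ Y) ∘ (λ_Y)⁻¹) ∘ ξ for all x : I → X and ξ : I → T Y. -/
open CategoryTheory MonoidalCategory

/-!
Naturality in the first variable moves a global element `x : 𝟙_ C ⟶ X` past the strength, so
`λ⁻¹ ≫ (x ⊗ ξ) ≫ σ` only involves `σ` at `X = 𝟙_ C`, where the left unit axiom pins it down as
`λ ≫ T(λ⁻¹)`. Since the unit is a separator and global elements of `X ⊗ T Y` decompose,
a morphism out of `X ⊗ T Y` is determined by its values on the elements `λ⁻¹ ≫ (x ⊗ ξ)`.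
-/

section

variable {C : Type*} [Category C] [MonoidalCategory C]

lemma tensor_hom_ext_of_globalElements
    (sep : ∀ {X Y : C} (u v : X ⟶ Y), (∀ e : 𝟙_ C ⟶ X, e ≫ u = e ≫ v) → u = v)
    (decomp : ∀ {X Y : C} (z : 𝟙_ C ⟶ X ⊗ Y),
      ∃ (x : 𝟙_ C ⟶ X) (y : 𝟙_ C ⟶ Y), z = (λ_ (𝟙_ C)).inv ≫ (x ⊗ₘ y))
    {X Y Z : C} (u v : X ⊗ Y ⟶ Z)
    (h : ∀ (x : 𝟙_ C ⟶ X) (y : 𝟙_ C ⟶ Y),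
      (λ_ (𝟙_ C)).inv ≫ (x ⊗ₘ y) ≫ u = (λ_ (𝟙_ C)).inv ≫ (x ⊗ₘ y) ≫ v) :
    u = v := by
  refine sep u v fun e => ?_
  obtain ⟨x, y, rfl⟩ := decomp e
  simpa only [Category.assoc] using h x y

variable (T : C ⥤ C) (s : ∀ X Y : C, X ⊗ T.obj Y ⟶ T.obj (X ⊗ Y))

lemma strength_unit_eq_leftUnitor (Y : C)
    (unit : s (𝟙_ C) Y ≫ T.map (λ_ Y).hom = (λ_ (T.obj Y)).hom) :
    s (𝟙_ C) Y = (λ_ (T.obj Y)).hom ≫ T.map (λ_ Y).inv := by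
  rw [← unit, Category.assoc, ← T.map_comp, Iso.hom_inv_id, T.map_id, Category.comp_id]

lemma strength_apply_globalElement
    (nat₁ : ∀ {X X' : C} (f : X ⟶ X') (Y : C),
      (f ⊗ₘ 𝟙 (T.obj Y)) ≫ s X' Y = s X Y ≫ T.map (f ⊗ₘ 𝟙 Y))
    (unit : ∀ Y : C, s (𝟙_ C) Y ≫ T.map (λ_ Y).hom = (λ_ (T.obj Y)).hom)
    {X Y : C} (x : 𝟙_ C ⟶ X) (ξ : 𝟙_ C ⟶ T.obj Y) :
    (λ_ (𝟙_ C)).inv ≫ (x ⊗ₘ ξ) ≫ s X Y = ξ ≫ T.map ((λ_ Y).inv ≫ (x ⊗ₘ 𝟙 Y)) := by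
  calc (λ_ (𝟙_ C)).inv ≫ (x ⊗ₘ ξ) ≫ s X Y
      = (λ_ (𝟙_ C)).inv ≫ (𝟙 (𝟙_ C) ⊗ₘ ξ) ≫ (x ⊗ₘ 𝟙 (T.obj Y)) ≫ s X Y := by
        rw [← Category.assoc (𝟙 _ ⊗ₘ ξ), tensorHom_comp_tensorHom, Category.id_comp,
          Category.comp_id]
    _ = ξ ≫ (λ_ (T.obj Y)).inv ≫ s (𝟙_ C) Y ≫ T.map (x ⊗ₘ 𝟙 Y) := by
        rw [nat₁, id_tensorHom, ← Category.assoc, ← leftUnitor_inv_naturality, Category.assoc]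
    _ = ξ ≫ T.map ((λ_ Y).inv ≫ (x ⊗ₘ 𝟙 Y)) := by
        rw [strength_unit_eq_leftUnitor T s Y (unit Y), Category.assoc, Iso.inv_hom_id_assoc,
          T.map_comp]

end

theorem strength_unique_general {C : Type*} [Category C] [MonoidalCategory C]
    (sep : ∀ {X Y : C} (u v : X ⟶ Y),
      (∀ e : 𝟙_ C ⟶ X, e ≫ u = e ≫ v) → u = v)
    (decomp : ∀ {X Y : C} (z : 𝟙_ C ⟶ X ⊗ Y),
      ∃ (x : 𝟙_ C ⟶ X) (y : 𝟙_ C ⟶ Y), z = (λ_ (𝟙_ C)).inv ≫ (x ⊗ₘ y))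
    (T : Monad C)
    (σ τ : ∀ X Y : C, X ⊗ T.obj Y ⟶ T.obj (X ⊗ Y))
    (σnat₁ : ∀ {X X' : C} (f : X ⟶ X') (Y : C),
      (f ⊗ₘ 𝟙 (T.obj Y)) ≫ σ X' Y = σ X Y ≫ T.map (f ⊗ₘ 𝟙 Y))
    (σunit : ∀ Y : C, σ (𝟙_ C) Y ≫ T.map (λ_ Y).hom = (λ_ (T.obj Y)).hom)
    (τnat₁ : ∀ {X X' : C} (f : X ⟶ X') (Y : C),
      (f ⊗ₘ 𝟙 (T.obj Y)) ≫ τ X' Y = τ X Y ≫ T.map (f ⊗ₘ 𝟙 Y))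
    (τunit : ∀ Y : C, τ (𝟙_ C) Y ≫ T.map (λ_ Y).hom = (λ_ (T.obj Y)).hom) :
    (∀ X Y : C, σ X Y = τ X Y) ∧
      ∀ (X Y : C) (x : 𝟙_ C ⟶ X) (ξ : 𝟙_ C ⟶ T.obj Y),
        (λ_ (𝟙_ C)).inv ≫ (x ⊗ₘ ξ) ≫ σ X Y =
          ξ ≫ T.map ((λ_ Y).inv ≫ (x ⊗ₘ 𝟙 Y)) := by
  refine ⟨fun X Y => tensor_hom_ext_of_globalElements sep decomp _ _ fun x ξ => ?_,
    fun X Y x ξ => strength_apply_globalElement T.toFunctor σ σnat₁ σunit x ξ⟩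
  rw [strength_apply_globalElement T.toFunctor σ σnat₁ σunit,
    strength_apply_globalElement T.toFunctor τ τnat₁ τunit]

/-- Uniqueness of tensorial strength: in a monoidal category whose unit is a
separator and in which every global element of a tensor product decomposes,
any two families `σ, τ : X ⊗ T Y ⟶ T (X ⊗ Y)` that are natural in each
variable and satisfy the left unit axiom coincide, and each is determined by
the formula `λ⁻¹ ≫ (x ⊗ ξ) ≫ σ = ξ ≫ T ((λ_Y)⁻¹ ≫ (x ⊗ 𝟙 Y))`. -/
theorem strength_unique {C : Type*} [Category C] [MonoidalCategory C]
    (sep : ∀ {X Y : C} (u v : X ⟶ Y),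
      (∀ e : 𝟙_ C ⟶ X, e ≫ u = e ≫ v) → u = v)
    (decomp : ∀ {X Y : C} (z : 𝟙_ C ⟶ X ⊗ Y),
      ∃ (x : 𝟙_ C ⟶ X) (y : 𝟙_ C ⟶ Y), z = (λ_ (𝟙_ C)).inv ≫ (x ⊗ₘ y))
    (T : Monad C)
    (σ τ : ∀ X Y : C, X ⊗ T.obj Y ⟶ T.obj (X ⊗ Y))
    (σnat₁ : ∀ {X X' : C} (f : X ⟶ X') (Y : C),
      (f ⊗ₘ 𝟙 (T.obj Y)) ≫ σ X' Y = σ X Y ≫ T.map (f ⊗ₘ 𝟙 Y))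
    (σnat₂ : ∀ (X : C) {Y Y' : C} (g : Y ⟶ Y'),
      (𝟙 X ⊗ₘ T.map g) ≫ σ X Y' = σ X Y ≫ T.map (𝟙 X ⊗ₘ g))
    (σunit : ∀ Y : C, σ (𝟙_ C) Y ≫ T.map (λ_ Y).hom = (λ_ (T.obj Y)).hom)
    (τnat₁ : ∀ {X X' : C} (f : X ⟶ X') (Y : C),
      (f ⊗ₘ 𝟙 (T.obj Y)) ≫ τ X' Y = τ X Y ≫ T.map (f ⊗ₘ 𝟙 Y))
    (τnat₂ : ∀ (X : C) {Y Y' : C} (g : Y ⟶ Y'),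
      (𝟙 X ⊗ₘ T.map g) ≫ τ X Y' = τ X Y ≫ T.map (𝟙 X ⊗ₘ g))
    (τunit : ∀ Y : C, τ (𝟙_ C) Y ≫ T.map (λ_ Y).hom = (λ_ (T.obj Y)).hom) :
    (∀ X Y : C, σ X Y = τ X Y) ∧
      ∀ (X Y : C) (x : 𝟙_ C ⟶ X) (ξ : 𝟙_ C ⟶ T.obj Y),
        (λ_ (𝟙_ C)).inv ≫ (x ⊗ₘ ξ) ≫ σ X Y =
          ξ ≫ T.map ((λ_ Y).inv ≫ (x ⊗ₘ 𝟙 Y)) :=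
  strength_unique_general sep decomp T σ τ σnat₁ σunit τnat₁ τunit
end

section
/- Let X and Y be measurable spaces such that the underlying set of X is infinite. Then the family Ω_{X,Y} is a σ-algebra on Hom(X,Y): it contains the empty set, is closed under complementation, and is closed under countable unions. -/
/-!
Every set in `Ω_{X,Y}` only looks at `f` along a countable set of points. Countably many such
sets are all read off along the union of those point sets, which is again countably infinite
and hence the range of a single injective sequence; each original sequence factors through it,
so the union is again of the form `⟨h,V⟩`.
-/

open MeasureTheory

open Set Function

theorem Set.Countable.exists_injective_nat_range_eq {X : Type*} {s : Set X} (hc : s.Countable)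
    (hi : s.Infinite) : ∃ k : ℕ → X, Injective k ∧ range k = s := by
  have : Countable s := hc.to_subtype
  have : Infinite s := hi.to_subtype
  obtain ⟨e⟩ : Nonempty (ℕ ≃ s) := nonempty_equiv_of_countable
  exact ⟨(↑) ∘ e, Subtype.val_injective.comp e.injective, by
    rw [range_comp, e.range_eq_univ, image_univ, Subtype.range_coe]⟩

section Omega

variable {X Y : Type*} [MeasurableSpace X] [MeasurableSpace Y]

theorem empty_mem_Omega [Infinite X] : (∅ : Set {f : X → Y // Measurable f}) ∈ Omega X Y :=
  ⟨Infinite.natEmbedding X, (Infinite.natEmbedding X).injective, ∅, by simp⟩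

theorem compl_mem_Omega {S : Set {f : X → Y // Measurable f}} (hS : S ∈ Omega X Y) :
    Sᶜ ∈ Omega X Y := by
  obtain ⟨h, hinj, V, rfl⟩ := hS
  exact ⟨h, hinj, Vᶜ, rfl⟩

theorem iUnion_mem_Omega {ι : Type*} [Countable ι] [Nonempty ι]
    {S : ι → Set {f : X → Y // Measurable f}} (hS : ∀ i, S i ∈ Omega X Y) :
    (⋃ i, S i) ∈ Omega X Y := by
  choose h hinj V hV using hS
  have hinf : (⋃ i, range (h i)).Infinite :=
    (infinite_range_of_injective (hinj (Classical.arbitrary ι))).mono (subset_iUnion _ _)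
  obtain ⟨k, hk, hrange⟩ :=
    (countable_iUnion fun i => countable_range (h i)).exists_injective_nat_range_eq hinf
  have hfactor : ∀ i, ∃ φ : ℕ → ℕ, h i = k ∘ φ := fun i =>
    range_subset_range_iff_exists_comp.1 (hrange ▸ subset_iUnion (fun i => range (h i)) i)
  choose φ hφ using hfactor
  refine ⟨k, hk, {g | ∃ i, g ∘ φ i ∈ V i}, ?_⟩
  ext f
  simp only [hV, hφ, mem_iUnion, mem_ofPred_eq]
  rfl

end Omega

/-- For `X` with infinite underlying set, `Ω_{X,Y}` is a σ-algebra on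
`Hom(X,Y)`: it contains `∅` and is closed under complements and countable
unions. -/
theorem Omega_isSigmaAlgebra (X Y : Type*) [MeasurableSpace X] [MeasurableSpace Y]
    [Infinite X] :
    (∅ : Set {f : X → Y // Measurable f}) ∈ Omega X Y ∧
    (∀ S : Set {f : X → Y // Measurable f}, S ∈ Omega X Y → Sᶜ ∈ Omega X Y) ∧
    (∀ S : ℕ → Set {f : X → Y // Measurable f},
      (∀ m, S m ∈ Omega X Y) → (⋃ m, S m) ∈ Omega X Y) :=
  ⟨empty_mem_Omega, fun _ => compl_mem_Omega, fun _ => iUnion_mem_Omega⟩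
end

section
/- Let X and Y be measurable spaces and let K be any set in the σ-algebra Σ_{X⊸Y}. Then there exists a countable set D ⊆ X such that membership in K depends only on the values on D: for all f, g ∈ Hom(X,Y), if f(x) = g(x) for every x ∈ D, then f ∈ K if and only if g ∈ K. -/
open MeasureTheory

/-! The sets of functions whose membership is decided by the values on some countable set form a
σ-algebra, since countable unions of countable sets are countable; it contains each generator
`⟨x,U⟩`, which is decided by `{x}`, hence all of `Σ_{X⊸Y}`. -/

def countablyDeterminedSigma (X Y : Type*) (p : (X → Y) → Prop) :
    MeasurableSpace {f : X → Y // p f} where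
  MeasurableSet' K := ∃ D : Set X, D.Countable ∧
    ∀ f g : {f : X → Y // p f}, (∀ x ∈ D, f.1 x = g.1 x) → (f ∈ K ↔ g ∈ K)
  measurableSet_empty := ⟨∅, Set.countable_empty, fun _ _ _ => Iff.rfl⟩
  measurableSet_compl := fun _ ⟨D, hD, hK⟩ =>
    ⟨D, hD, fun f g hfg => not_congr (hK f g hfg)⟩
  measurableSet_iUnion := fun K hK => by
    choose D hD hKD using hK
    refine ⟨⋃ n, D n, Set.countable_iUnion hD, fun f g hfg => ?_⟩
    simp only [Set.mem_iUnion]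
    exact exists_congr fun n => hKD n f g fun x hx => hfg x (Set.mem_iUnion_of_mem n hx)

theorem homSigma_le_countablyDeterminedSigma (X Y : Type*) [MeasurableSpace X]
    [MeasurableSpace Y] : homSigma X Y ≤ countablyDeterminedSigma X Y Measurable := by
  refine MeasurableSpace.generateFrom_le ?_
  rintro _ ⟨x, U, -, rfl⟩
  exact ⟨{x}, Set.countable_singleton x, fun f g hfg => by simp [hfg x rfl]⟩

/-- Membership in any `Σ_{X⊸Y}`-measurable set `K` depends only on the values
of a function on some countable set `D ⊆ X`. -/
theorem homSigma_countably_determined (X Y : Type*) [MeasurableSpace X]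
    [MeasurableSpace Y] (K : Set {f : X → Y // Measurable f})
    (hK : MeasurableSet[homSigma X Y] K) :
    ∃ D : Set X, D.Countable ∧
      ∀ f g : {f : X → Y // Measurable f},
        (∀ x ∈ D, f.1 x = g.1 x) → (f ∈ K ↔ g ∈ K) :=
  homSigma_le_countablyDeterminedSigma X Y K hK
end

section
/- Let X = Y = ℝ with the Borel σ-algebra, and let μ be a probability measure on ℝ that is absolutely continuous with respect to the Borel (Lebesgue) measure m (i.e., m(A) = 0 implies μ(A) = 0 for all Borel A). Then the set K = {f ∈ Hom(ℝ,ℝ) | μ(f⁻¹({0})) = 1} does not belong to the σ-algebra Σ_{ℝ⊸ℝ}. -/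
/-!
A `Σ_{X⊸Y}`-measurable set of functions is determined by the values of its members on some
countable set `D`, since this property holds for the generators `⟨x,U⟩` and survives complements
and countable unions. The zero function lies in `K`, while the indicator of `Dᶜ` agrees with it
on `D` but vanishes exactly on the `μ`-null set `D`, so `K` cannot be determined by `D`.
-/

open MeasureTheory

open Set

section

variable {X Y : Type*} [MeasurableSpace X] [MeasurableSpace Y]

def DeterminedBy (S : Set {f : X → Y // Measurable f}) (D : Set X) : Prop :=
  ∀ f g : {f : X → Y // Measurable f}, EqOn f.1 g.1 D → (f ∈ S ↔ g ∈ S)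

theorem exists_countable_determinedBy_of_measurableSet_homSigma {S : Set {f : X → Y // Measurable f}}
    (hS : MeasurableSet[homSigma X Y] S) : ∃ D : Set X, D.Countable ∧ DeterminedBy S D := by
  induction S, hS using MeasurableSpace.generateFrom_induction with
  | hC _ hgen =>
    obtain ⟨x, U, -, rfl⟩ := hgen
    exact ⟨{x}, countable_singleton x, fun f g hfg => by simp [hfg (mem_singleton x)]⟩
  | empty => exact ⟨∅, countable_empty, fun _ _ _ => Iff.rfl⟩
  | compl _ _ ih =>
    obtain ⟨D, hD, hSD⟩ := ih
    exact ⟨D, hD, fun f g hfg => not_congr (hSD f g hfg)⟩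
  | iUnion _ _ ih =>
    choose D hD hSD using ih
    refine ⟨⋃ n, D n, countable_iUnion hD, fun f g hfg => ?_⟩
    simp only [mem_iUnion]
    exact exists_congr fun n => hSD n f g (hfg.mono (subset_iUnion D n))

end

/-- For a probability measure `μ` on `ℝ` absolutely continuous w.r.t. Lebesgue
measure, the set `K = {f ∈ Hom(ℝ,ℝ) | μ(f⁻¹{0}) = 1}` is not
`Σ_{ℝ⊸ℝ}`-measurable. -/
theorem counterexample_not_measurableSet (μ : Measure ℝ) [IsProbabilityMeasure μ]
    (hac : μ ≪ (volume : Measure ℝ)) :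
    ¬ MeasurableSet[homSigma ℝ ℝ]
        {f : {f : ℝ → ℝ // Measurable f} | μ (f.1 ⁻¹' {0}) = 1} := by
  intro hK
  obtain ⟨D, hD, hKD⟩ := exists_countable_determinedBy_of_measurableSet_homSigma hK
  let zero : {f : ℝ → ℝ // Measurable f} := ⟨0, measurable_zero⟩
  let g : {f : ℝ → ℝ // Measurable f} :=
    ⟨Dᶜ.indicator 1, measurable_one.indicator hD.measurableSet.compl⟩
  have hzero_mem : μ (zero.1 ⁻¹' {0}) = 1 := by simp [zero, Pi.zero_def]
  have hg_zeros : g.1 ⁻¹' {0} = D := by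
    ext x
    by_cases hx : x ∈ D <;> simp [g, hx]
  have hg_mem : μ (g.1 ⁻¹' {0}) = 1 :=
    (hKD zero g fun x hx => by simp [zero, g, hx]).1 hzero_mem
  rw [hg_zeros, hac (hD.measure_zero volume)] at hg_mem
  exact zero_ne_one hg_mem
end

section
/- Let μ be a probability measure on ℝ (with the Borel σ-algebra) that is absolutely continuous with respect to Lebesgue measure. Then the pushforward map G : Hom(ℝ,ℝ) → 𝒢(ℝ), f ↦ μ(f⁻¹(−)) (i.e., f ↦ the pushforward measure f_*μ), is not measurable from (Hom(ℝ,ℝ), Σ_{ℝ⊸ℝ}) to the space 𝒢(ℝ) of probability measures on ℝ equipped with the σ-algebra generated by the evaluation maps ν ↦ ν(A) for Borel sets A ⊆ ℝ. -/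
open MeasureTheory

open MeasureTheory

def girySigma (α : Type*) [MeasurableSpace α] :
    MeasurableSpace {ν : Measure α // IsProbabilityMeasure ν} :=
  ⨆ (A : Set α) (_ : MeasurableSet A),
    MeasurableSpace.comap (fun ν : {ν : Measure α // IsProbabilityMeasure ν} => ν.1 A)
      inferInstance

lemma exists_countable_determining_of_measurableSet_homSigma {X Y : Type*}
    [MeasurableSpace X] [MeasurableSpace Y] {S : Set {f : X → Y // Measurable f}}
    (hS : MeasurableSet[homSigma X Y] S) :
    ∃ D : Set X, D.Countable ∧
      ∀ f g : {f : X → Y // Measurable f}, Set.EqOn f.1 g.1 D → (f ∈ S ↔ g ∈ S) := by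
  induction S, hS using MeasurableSpace.generateFrom_induction with
  | hC S hS =>
    obtain ⟨x, U, -, rfl⟩ := hS
    exact ⟨{x}, Set.countable_singleton x, fun f g hfg => by
      simp only [Set.mem_ofPred_eq, hfg (Set.mem_singleton x)]⟩
  | empty => exact ⟨∅, Set.countable_empty, fun _ _ _ => Iff.rfl⟩
  | compl S _ ih =>
    obtain ⟨D, hD, hdet⟩ := ih
    exact ⟨D, hD, fun f g hfg => not_congr (hdet f g hfg)⟩
  | iUnion S _ ih =>
    choose D hD hdet using ih
    refine ⟨⋃ n, D n, Set.countable_iUnion hD, fun f g hfg => ?_⟩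
    simp only [Set.mem_iUnion]
    exact exists_congr fun n => hdet n f g (hfg.mono (Set.subset_iUnion D n))

lemma measurable_girySigma_eval {α : Type*} [MeasurableSpace α] {A : Set α}
    (hA : MeasurableSet A) :
    Measurable[girySigma α] (fun ν : {ν : Measure α // IsProbabilityMeasure ν} => ν.1 A) :=
  measurable_iff_comap_le.2 <| le_iSup₂
    (f := fun (A : Set α) (_ : MeasurableSet A) => MeasurableSpace.comap
      (fun ν : {ν : Measure α // IsProbabilityMeasure ν} => ν.1 A) inferInstance) A hA

theorem not_measurable_homSigma_map {X Y : Type*} [MeasurableSpace X]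
    [MeasurableSingletonClass X] [MeasurableSpace Y] [MeasurableSingletonClass Y] [Nontrivial Y]
    (μ : Measure X) [IsProbabilityMeasure μ] [NullSingletonClass μ] :
    ¬ Measurable[homSigma X Y, girySigma Y]
        (fun f : {f : X → Y // Measurable f} =>
          (⟨μ.map f.1, Measure.isProbabilityMeasure_map f.2.aemeasurable⟩ :
            {ν : Measure Y // IsProbabilityMeasure ν})) := by
  intro hmeas
  obtain ⟨y₀, y₁, hne⟩ := exists_pair_ne Y
  have hS : MeasurableSet[homSigma X Y] {f | μ.map f.1 {y₀} = 1} :=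
    hmeas (measurable_girySigma_eval (measurableSet_singleton y₀) (measurableSet_singleton 1))
  obtain ⟨D, hD, hdet⟩ := exists_countable_determining_of_measurableSet_homSigma hS
  classical
  let c : {f : X → Y // Measurable f} := ⟨fun _ => y₀, measurable_const⟩
  let g : {f : X → Y // Measurable f} :=
    ⟨D.piecewise (fun _ => y₀) (fun _ => y₁),
      measurable_const.piecewise hD.measurableSet measurable_const⟩
  have hc : μ.map c.1 {y₀} = 1 := by simp [c]
  have hg_preimage : g.1 ⁻¹' {y₀} = D := by
    ext x
    by_cases hx : x ∈ D <;> simp [g, hx, hne.symm]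
  have hg : μ.map g.1 {y₀} = 1 :=
    (hdet c g fun _ hx => (D.piecewise_eq_of_mem (fun _ => y₀) (fun _ => y₁) hx).symm).1 hc
  rw [Measure.map_apply g.2 (measurableSet_singleton y₀), hg_preimage, hD.measure_zero μ] at hg
  exact zero_ne_one hg

/-- For a probability measure `μ` on `ℝ` absolutely continuous w.r.t. Lebesgue
measure, the pushforward map `f ↦ f_*μ` is not measurable from
`(Hom(ℝ,ℝ), Σ_{ℝ⊸ℝ})` to the Giry space `𝒢(ℝ)`. -/
theorem pushforward_not_measurable (μ : Measure ℝ) [IsProbabilityMeasure μ]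
    (hac : μ ≪ (volume : Measure ℝ)) :
    ¬ @Measurable _ _ (homSigma ℝ ℝ) (girySigma ℝ)
        (fun f : {f : ℝ → ℝ // Measurable f} =>
          (⟨μ.map f.1, Measure.isProbabilityMeasure_map f.2.aemeasurable⟩ :
            {ν : Measure ℝ // IsProbabilityMeasure ν})) :=
  have : NullSingletonClass μ := ⟨fun x => hac (measure_singleton x)⟩
  not_measurable_homSigma_map μ
end
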